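/- Let 1 ≤ α < 2, set κ = (2−α)/2 and ν = (α−1)/(2−α), let j > 0, and let J_ν be the Bessel function of the first kind of order ν, defined for x > 0 by the convergent series J_ν(x) = Σ_{m≥0} (−1)^m/(m!·Γ(1+ν+m))·(x/2)^{2m+ν}. Define u(x) := x^{(1−α)/2}·J_ν(j·x^κ) for x ∈ (0,1). Then u is differentiable on (0,1) and x^α·u'(x) tends to 0 as x → 0⁺. -/

import Mathlib

/-!
With `κ = (2 - α) / 2`, every term of the series of `J_ν(j x ^ κ)` is `x ^ (κ ν)` times a power
of `x ^ (2 κ) = x ^ (2 - α)`, and the coefficients decay like `1 / (m! Γ(1 + ν + m))`, so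
`J_ν(j x ^ κ) = x ^ (κ ν) f(x ^ (2 - α))` for an entire function `f`. Since `κ ν = (α - 1) / 2`,
the prefactor cancels and `u(x) = f(x ^ (2 - α))`. The chain rule then gives
`x ^ α u'(x) = (2 - α) x f'(x ^ (2 - α))`, which tends to `0` as `x → 0⁺`.
-/

open Real Filter

open FormalMultilinearSeries Topology Nat

theorem FormalMultilinearSeries.contDiff_sum_of_radius_eq_top {𝕜 E F : Type*}
    [NontriviallyNormedField 𝕜] [NormedAddCommGroup E] [NormedSpace 𝕜 E]
    [NormedAddCommGroup F] [NormedSpace 𝕜 F] [CompleteSpace F]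
    (p : FormalMultilinearSeries 𝕜 E F) (hp : p.radius = ⊤) {n : WithTop ℕ∞} :
    ContDiff 𝕜 n p.sum :=
  AnalyticOnNhd.contDiff fun _ _ ↦
    (p.hasFPowerSeriesOnBall (by simp [hp])).analyticAt_of_mem (by simp [hp])

/-- `besselCoeff ν a m` is the `m`-th term of the series of `J_ν(2a)`. -/
noncomputable def besselCoeff (ν a : ℝ) (m : ℕ) : ℝ :=
  (-1 : ℝ) ^ m / (m ! * Gamma (1 + ν + m)) * a ^ (2 * (m : ℝ) + ν)

section besselCoeff

variable {ν a : ℝ}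

theorem besselCoeff_ne_zero (hν : -1 < ν) (ha : 0 < a) (m : ℕ) : besselCoeff ν a m ≠ 0 := by
  have : 0 < Gamma (1 + ν + m) := Gamma_pos_of_pos (by linarith [m.cast_nonneg (α := ℝ)])
  unfold besselCoeff
  positivity

theorem besselCoeff_succ (hν : -1 < ν) (ha : 0 < a) (m : ℕ) :
    besselCoeff ν a (m + 1) = -(a ^ 2 / ((m + 1) * (1 + ν + m))) * besselCoeff ν a m := by
  have hpos : 0 < 1 + ν + m := by linarith [m.cast_nonneg (α := ℝ)]
  have hGamma : Gamma (1 + ν + ↑(m + 1)) = (1 + ν + m) * Gamma (1 + ν + m) := by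
    rw [Nat.cast_succ, ← add_assoc, Gamma_add_one hpos.ne']
  have hpow : a ^ (2 * ((m + 1 : ℕ) : ℝ) + ν) = a ^ 2 * a ^ (2 * (m : ℝ) + ν) := by
    rw [← rpow_two, ← rpow_add ha]
    push_cast
    ring_nf
  have hGamma_ne := (Gamma_pos_of_pos hpos).ne'
  simp only [besselCoeff, hGamma, hpow, factorial_succ, pow_succ]
  push_cast
  field_simp

theorem radius_ofScalars_besselCoeff (hν : -1 < ν) (ha : 0 < a) :
    (ofScalars ℝ (besselCoeff ν a)).radius = ⊤ := by
  refine ofScalars_radius_eq_top_of_tendsto _ _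
    (.of_forall (besselCoeff_ne_zero hν ha)) ?_
  have hratio : ∀ m : ℕ, ‖besselCoeff ν a m.succ‖ / ‖besselCoeff ν a m‖ =
      a ^ 2 * ((m + 1) * (1 + ν + m))⁻¹ := fun m ↦ by
    have : 0 < 1 + ν + m := by linarith [m.cast_nonneg (α := ℝ)]
    rw [besselCoeff_succ hν ha, norm_mul, mul_div_assoc,
      div_self (norm_ne_zero_iff.mpr (besselCoeff_ne_zero hν ha m)), mul_one, norm_neg,
      Real.norm_of_nonneg (by positivity), div_eq_mul_inv]
  simp_rw [hratio]
  have hden : Tendsto (fun m : ℕ ↦ ((m : ℝ) + 1) * (1 + ν + m)) atTop atTop :=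
    (tendsto_atTop_add_const_right _ 1 (tendsto_natCast_atTop_atTop (R := ℝ))).atTop_mul_atTop₀
      (tendsto_atTop_add_const_left _ (1 + ν) tendsto_natCast_atTop_atTop)
  simpa using hden.inv_tendsto_atTop.const_mul (a ^ 2)

theorem contDiff_ofScalarsSum_besselCoeff (hν : -1 < ν) (ha : 0 < a) {n : WithTop ℕ∞} :
    ContDiff ℝ n (ofScalarsSum (E := ℝ) (besselCoeff ν a)) :=
  contDiff_sum_of_radius_eq_top _ (radius_ofScalars_besselCoeff hν ha)

theorem besselCoeff_mul (ha : 0 ≤ a) {y : ℝ} (hy : 0 < y) (m : ℕ) :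
    besselCoeff ν (a * y) m = y ^ ν * (besselCoeff ν a m * (y ^ 2) ^ m) := by
  have hy_pow : y ^ (2 * (m : ℝ) + ν) = (y ^ 2) ^ m * y ^ ν := by
    rw [rpow_add hy, ← pow_mul, ← rpow_natCast]
    push_cast
    rfl
  simp only [besselCoeff, mul_rpow ha hy.le, hy_pow]
  ring

theorem tsum_besselCoeff_mul (ha : 0 ≤ a) {y : ℝ} (hy : 0 < y) :
    ∑' m, besselCoeff ν (a * y) m = y ^ ν * ofScalarsSum (E := ℝ) (besselCoeff ν a) (y ^ 2) := by
  simp only [ofScalars_sum_eq, smul_eq_mul, ← tsum_mul_left, besselCoeff_mul ha hy]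

theorem rpow_neg_mul_tsum_besselCoeff_mul_rpow (ha : 0 ≤ a) {x : ℝ} (hx : 0 < x) (κ : ℝ) :
    x ^ (-(κ * ν)) * ∑' m, besselCoeff ν (a * x ^ κ) m =
      ofScalarsSum (E := ℝ) (besselCoeff ν a) (x ^ (2 * κ)) := by
  rw [tsum_besselCoeff_mul ha (by positivity), ← mul_assoc, ← rpow_mul hx.le, ← rpow_add hx,
    neg_add_cancel, rpow_zero, one_mul, ← rpow_natCast, ← rpow_mul hx.le, Nat.cast_ofNat,
    mul_comm]

end besselCoeff

theorem hasDerivAt_comp_rpow {f : ℝ → ℝ} (hf : Differentiable ℝ f) (p : ℝ) {x : ℝ} (hx : 0 < x) :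
    HasDerivAt (fun y ↦ f (y ^ p)) (deriv f (x ^ p) * (p * x ^ (p - 1))) x :=
  (hf _).hasDerivAt.comp x (hasDerivAt_rpow_const (.inl hx.ne'))

theorem tendsto_rpow_mul_deriv_comp_rpow {f : ℝ → ℝ} (hf : ContDiff ℝ 1 f) {α : ℝ} (hα : α < 2) :
    Tendsto (fun x ↦ x ^ α * deriv (fun y ↦ f (y ^ (2 - α))) x) (𝓝[>] 0) (𝓝 0) := by
  have hweight : ∀ x ∈ Set.Ioi (0 : ℝ),
      x ^ α * deriv (fun y ↦ f (y ^ (2 - α))) x = (2 - α) * x * deriv f (x ^ (2 - α)) := by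
    intro x hx
    rw [(hasDerivAt_comp_rpow (hf.differentiable one_ne_zero) _ hx).deriv]
    calc x ^ α * (deriv f (x ^ (2 - α)) * ((2 - α) * x ^ (2 - α - 1)))
        = (2 - α) * (x ^ α * x ^ (2 - α - 1)) * deriv f (x ^ (2 - α)) := by ring
      _ = (2 - α) * x * deriv f (x ^ (2 - α)) := by
        rw [← rpow_add hx, show α + (2 - α - 1) = 1 by ring, rpow_one]
  have hpow : Tendsto (fun x : ℝ ↦ x ^ (2 - α)) (𝓝[>] 0) (𝓝 0) := by
    simpa [zero_rpow (by linarith : 2 - α ≠ 0)] using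
      (continuousAt_rpow_const 0 (2 - α) (.inr (by linarith))).tendsto.mono_left
        nhdsWithin_le_nhds
  have hlim : Tendsto (fun x ↦ (2 - α) * x * deriv f (x ^ (2 - α))) (𝓝[>] 0)
      (𝓝 ((2 - α) * 0 * deriv f 0)) :=
    ((tendsto_nhdsWithin_of_tendsto_nhds tendsto_id).const_mul _).mul
      (((hf.continuous_deriv le_rfl).tendsto 0).comp hpow)
  rw [mul_zero, zero_mul] at hlim
  exact hlim.congr' (eventually_nhdsWithin_of_forall fun x hx ↦ (hweight x hx).symm)

theorem strongly_degenerate_weighted_neumann_at_zero_general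
    (α : ℝ) (hα2 : α < 2) (j : ℝ) (hj : 0 < j)
    (J : ℝ → ℝ)
    (hJ : ∀ x : ℝ, 0 < x →
      J x = ∑' m : ℕ,
        ((-1 : ℝ) ^ m / (m.factorial * Real.Gamma (1 + (α - 1) / (2 - α) + m))) *
          (x / 2) ^ (2 * (m : ℝ) + (α - 1) / (2 - α)))
    (u : ℝ → ℝ)
    (hu : ∀ x : ℝ, u x = x ^ ((1 - α) / 2) * J (j * x ^ ((2 - α) / 2))) :
    (∀ x ∈ Set.Ioo (0 : ℝ) 1, DifferentiableAt ℝ u x) ∧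
    Tendsto (fun x : ℝ => x ^ α * deriv u x) (nhdsWithin 0 (Set.Ioi 0)) (nhds 0) := by
  have h2α : 0 < 2 - α := by linarith
  set ν := (α - 1) / (2 - α) with hν_def
  set f := ofScalarsSum (E := ℝ) (besselCoeff ν (j / 2))
  have hν : -1 < ν := by
    rw [hν_def, lt_div_iff₀ h2α]
    linarith
  have hf : ContDiff ℝ 1 f := contDiff_ofScalarsSum_besselCoeff hν (by positivity)
  have hJ_coeff : ∀ y, 0 < y → J y = ∑' m, besselCoeff ν (y / 2) m := hJ
  have hexp : (1 - α) / 2 = -((2 - α) / 2 * ν) := by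
    rw [hν_def]
    field_simp
    ring
  have hu_eq : ∀ x, 0 < x → u x = f (x ^ (2 - α)) := fun x hx ↦ by
    rw [hu, hJ_coeff _ (by positivity), mul_div_right_comm, hexp,
      rpow_neg_mul_tsum_besselCoeff_mul_rpow (by positivity) hx, mul_div_cancel₀ _ two_ne_zero]
  have hu_nhds : ∀ x, 0 < x → u =ᶠ[𝓝 x] fun y ↦ f (y ^ (2 - α)) :=
    fun x hx ↦ eventually_of_mem (Ioi_mem_nhds hx) hu_eq
  refine ⟨fun x hx ↦ ?_, ?_⟩
  · exact (hasDerivAt_comp_rpow (hf.differentiable one_ne_zero) _ hx.1).differentiableAt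
      |>.congr_of_eventuallyEq (hu_nhds x hx.1)
  · refine (tendsto_rpow_mul_deriv_comp_rpow hf hα2).congr' ?_
    filter_upwards [self_mem_nhdsWithin] with x hx
    rw [(hu_nhds x hx).deriv_eq]

/-- Strongly degenerate case `1 ≤ α < 2`: with `κ = (2−α)/2`,
`ν = (α−1)/(2−α)` and `j > 0`, the function `u(x) = x^{(1−α)/2}·J_ν(j·x^κ)` is
differentiable on `(0,1)` and `x^α·u'(x) → 0` as `x → 0⁺`, where `J_ν` is the Bessel
function of the first kind. -/
theorem strongly_degenerate_weighted_neumann_at_zero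
    (α : ℝ) (hα1 : 1 ≤ α) (hα2 : α < 2) (j : ℝ) (hj : 0 < j)
    (J : ℝ → ℝ)
    (hJ : ∀ x : ℝ, 0 < x →
      J x = ∑' m : ℕ,
        ((-1 : ℝ) ^ m / (m.factorial * Real.Gamma (1 + (α - 1) / (2 - α) + m))) *
          (x / 2) ^ (2 * (m : ℝ) + (α - 1) / (2 - α)))
    (u : ℝ → ℝ)
    (hu : ∀ x : ℝ, u x = x ^ ((1 - α) / 2) * J (j * x ^ ((2 - α) / 2))) :
    (∀ x ∈ Set.Ioo (0 : ℝ) 1, DifferentiableAt ℝ u x) ∧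
    Tendsto (fun x : ℝ => x ^ α * deriv u x) (nhdsWithin 0 (Set.Ioi 0)) (nhds 0) :=
  strongly_degenerate_weighted_neumann_at_zero_general α hα2 j hj J hJ u hu
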